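/- arXiv:2108.03059 — 2 statements merged into one kernel-verified Lean document; each statement's English description precedes it below -/
import Mathlib

section
/- Let A₁ and A₂ be two disjoint AO sets in G, and suppose A₂ is x̄_{A₁}-AO in G. Then for any pattern p, N(G*)p = 𝟏 if and only if N(G)p = x̄_{A₁} or N(G)p = x̄_{A₂}. Moreover, A₁ and A₂ are HO in G*, and ν(G*) = ν(G) + 1. -/
open Matrix
open scoped Classical

/-- The closed neighborhood matrix of a simple graph over `ℤ₂`:
`N(G) u v = 1` iff `u = v` or `u` is adjacent to `v`. -/
noncomputable def nbhdMatrix {V : Type*} [Fintype V] (G : SimpleGraph V) :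
    Matrix V V (ZMod 2) :=
  Matrix.of fun u v => if u = v ∨ G.Adj u v then 1 else 0

/-- The nullity of a matrix over `ℤ₂`: the dimension of its kernel. -/
noncomputable def nullityM {V : Type*} [Fintype V] (M : Matrix V V (ZMod 2)) : ℕ :=
  Module.finrank (ZMod 2) (LinearMap.ker M.mulVecLin)

/-- The nullity `ν(G)` of a graph. -/
noncomputable def graphNullity {V : Type*} [Fintype V] (G : SimpleGraph V) : ℕ :=
  nullityM (nbhdMatrix G)

/-- Characteristic vector of a set of vertices. -/
noncomputable def chi {V : Type*} (A : Set V) : V → ZMod 2 :=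
  fun v => if v ∈ A then 1 else 0

/-- A configuration `c` is solvable (w.r.t. the matrix `M`) if `M p = c` for some pattern `p`. -/
def Solv {V : Type*} [Fintype V] (M : Matrix V V (ZMod 2)) (c : V → ZMod 2) : Prop :=
  ∃ p : V → ZMod 2, M.mulVec p = c

/-- `A` is `c`-always odd activated: `A` is solvable and `x_A · p = 1` for every solving
pattern `p` for `c`. -/
def cAO {V : Type*} [Fintype V] (M : Matrix V V (ZMod 2)) (c : V → ZMod 2)
    (A : Set V) : Prop :=
  Solv M (chi A) ∧ ∀ p : V → ZMod 2, M.mulVec p = c → chi A ⬝ᵥ p = 1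

/-- `A` is `c`-never odd activated: `A` is solvable and `x_A · p = 0` for every solving
pattern `p` for `c`. -/
def cNO {V : Type*} [Fintype V] (M : Matrix V V (ZMod 2)) (c : V → ZMod 2)
    (A : Set V) : Prop :=
  Solv M (chi A) ∧ ∀ p : V → ZMod 2, M.mulVec p = c → chi A ⬝ᵥ p = 0

/-- `A` is always odd activated (AO): `𝟏`-always odd activated. -/
def AO {V : Type*} [Fintype V] (M : Matrix V V (ZMod 2)) (A : Set V) : Prop :=
  cAO M 1 A

/-- `A` is never odd activated (NO): `𝟏`-never odd activated. -/
def NO {V : Type*} [Fintype V] (M : Matrix V V (ZMod 2)) (A : Set V) : Prop :=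
  cNO M 1 A

/-- `A` is half odd activated (HO): `x_A` is not solvable. -/
def HO {V : Type*} [Fintype V] (M : Matrix V V (ZMod 2)) (A : Set V) : Prop :=
  ¬ Solv M (chi A)

/-- The closed neighborhood matrix of the graph `G*` obtained from `G` by toggling every
pair of vertices between the disjoint sets `A₁` and `A₂`:
`N(G*) = N(G) + x_{A₁} x_{A₂}ᵗ + x_{A₂} x_{A₁}ᵗ` over `ℤ₂`. -/
noncomputable def starMatrix {V : Type*} [Fintype V] (G : SimpleGraph V)
    (A₁ A₂ : Set V) : Matrix V V (ZMod 2) :=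
  nbhdMatrix G + Matrix.vecMulVec (chi A₁) (chi A₂) + Matrix.vecMulVec (chi A₂) (chi A₁)

section Helpers

variable {V : Type*} [Fintype V]

theorem zmod2_sq (x : ZMod 2) : x * x = x := by revert x; decide

theorem pi_add_self (x : V → ZMod 2) : x + x = 0 := by
  funext v
  simp only [Pi.add_apply, Pi.zero_apply]
  exact CharTwo.add_self_eq_zero (x v)

theorem pi_move {x y u : V → ZMod 2} (h : x + u = y) : x = y + u := by
  rw [← h, add_assoc, pi_add_self, add_zero]

theorem dotp_single (x : V → ZMod 2) (v : V) :
    Pi.single v 1 ⬝ᵥ x = x v := by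
  simp [dotProduct, Pi.single_apply]

theorem dshuffle (M : Matrix V V (ZMod 2)) (hM : M.IsSymm) (x y : V → ZMod 2) :
    M.mulVec x ⬝ᵥ y = x ⬝ᵥ M.mulVec y := by
  rw [dotProduct_mulVec, ← hM.eq, vecMul_transpose, hM.eq]

theorem quadId (M : Matrix V V (ZMod 2)) (hM : M.IsSymm) (p : V → ZMod 2) :
    M.mulVec p ⬝ᵥ p = (fun v => M v v) ⬝ᵥ p := by
  classical
  have hsym : ∀ a b : V, M a b = M b a := fun a b => by
    conv_lhs => rw [← hM.eq]
    rfl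
  have key : M.mulVec p ⬝ᵥ p = ∑ x ∈ Finset.univ ×ˢ Finset.univ, M x.1 x.2 * p x.2 * p x.1 := by
    rw [Finset.sum_product]
    simp [dotProduct, mulVec, Finset.sum_mul]
  rw [key, ← Finset.diag_union_offDiag,
    Finset.sum_union (Finset.disjoint_diag_offDiag _), Finset.sum_diag]
  have h0 : ∑ x ∈ Finset.univ.offDiag, M x.1 x.2 * p x.2 * p x.1 = 0 := by
    apply Finset.sum_involution (fun a _ => Prod.swap a)
    · intro a ha
      simp only [Prod.fst_swap, Prod.snd_swap]
      rw [hsym a.2 a.1]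
      ring_nf
      rw [show (2:ZMod 2) = 0 from rfl, mul_zero]
    · intro a ha _ hc
      have h1 : a.1 ≠ a.2 := (Finset.mem_offDiag.mp ha).2.2
      exact h1 (congrArg Prod.fst hc).symm
    · intro a ha
      have := Finset.mem_offDiag.mp ha
      exact Finset.mem_offDiag.mpr ⟨this.2.1, this.1, Ne.symm this.2.2⟩
    · intro a ha; rfl
  rw [h0, add_zero]
  apply Finset.sum_congr rfl
  intro v _
  rw [mul_assoc, zmod2_sq]

theorem sutner (M : Matrix V V (ZMod 2)) (hM : M.IsSymm) (hdiag : ∀ v, M v v = 1) :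
    ∃ r, M.mulVec r = 1 := by
  by_contra h
  have h1 : (1 : V → ZMod 2) ∉ LinearMap.range M.mulVecLin := by
    intro ⟨r, hr⟩
    exact h ⟨r, by simpa using hr⟩
  set W := LinearMap.range M.mulVecLin with hW
  have hq : W.mkQ (1 : V → ZMod 2) ≠ 0 := by
    simp only [Submodule.mkQ_apply, ne_eq, Submodule.Quotient.mk_eq_zero]
    exact h1
  have : ¬ ∀ f : Module.Dual (ZMod 2) ((V → ZMod 2) ⧸ W), f (W.mkQ 1) = 0 := by
    rw [Module.forall_dual_apply_eq_zero_iff]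
    exact hq
  obtain ⟨f, hf⟩ := not_forall.mp this
  set φ : (V → ZMod 2) →ₗ[ZMod 2] ZMod 2 := f.comp W.mkQ with hφ
  have hφW : ∀ x : V → ZMod 2, φ (M.mulVec x) = 0 := by
    intro x
    have : M.mulVec x ∈ W := ⟨x, by simp⟩
    simp [hφ, (Submodule.Quotient.mk_eq_zero _).mpr this]
  set k : V → ZMod 2 := fun v => φ (fun j => if v = j then 1 else 0) with hk
  have hrep : ∀ x : V → ZMod 2, φ x = x ⬝ᵥ k := by
    intro x
    rw [LinearMap.pi_apply_eq_sum_univ φ x]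
    simp [dotProduct, hk, smul_eq_mul]
  have hker : M.mulVec k = 0 := by
    funext v
    have := dshuffle M hM (Pi.single v 1) k
    rw [← hrep, hφW] at this
    rw [dotp_single] at this
    simpa using this.symm
  have hzero : (1 : V → ZMod 2) ⬝ᵥ k = 0 := by
    have := quadId M hM k
    rw [hker] at this
    have hd : (fun v => M v v) = (1 : V → ZMod 2) := by
      funext v; simp [hdiag v]
    rw [hd] at this
    simpa using this.symm
  have hf' : φ (1 : V → ZMod 2) ≠ 0 := hf
  rw [hrep 1] at hf'
  exact hf' hzero

theorem nbhd_symm (G : SimpleGraph V) : (nbhdMatrix G).IsSymm := by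
  unfold Matrix.IsSymm
  funext u v
  simp only [Matrix.transpose_apply, nbhdMatrix, Matrix.of_apply]
  congr 1
  apply propext
  constructor
  · rintro (h | h)
    · exact Or.inl h.symm
    · exact Or.inr h.symm
  · rintro (h | h)
    · exact Or.inl h.symm
    · exact Or.inr h.symm

theorem nbhd_diag (G : SimpleGraph V) (v : V) : nbhdMatrix G v v = 1 := by
  simp [nbhdMatrix]

theorem starMV (G : SimpleGraph V) (A₁ A₂ : Set V) (p : V → ZMod 2) :
    (starMatrix G A₁ A₂).mulVec p =
      (nbhdMatrix G).mulVec p + (chi A₂ ⬝ᵥ p) • chi A₁ + (chi A₁ ⬝ᵥ p) • chi A₂ := by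
  unfold starMatrix
  rw [add_mulVec, add_mulVec]
  congr 1
  · congr 1
    funext v
    simp [mulVec, vecMulVec_apply, dotProduct, Finset.mul_sum, mul_assoc,
      Finset.sum_mul, mul_comm, mul_left_comm]
  · funext v
    simp [mulVec, vecMulVec_apply, dotProduct, Finset.mul_sum, mul_assoc,
      Finset.sum_mul, mul_comm, mul_left_comm]

end Helpers

/-- Proposition (AO, AO, `x̄_{A₁}`-AO): the odd dominating patterns of `G*` are exactly
the solving patterns of `x̄_{A₁}` or `x̄_{A₂}` in `G`; `A₁` and `A₂` are HO in `G*`,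
and `ν(G*) = ν(G) + 1`. -/
theorem stmt15 {V : Type*} [Fintype V] (G : SimpleGraph V) (A₁ A₂ : Set V)
    (hd : Disjoint A₁ A₂)
    (h1 : AO (nbhdMatrix G) A₁) (h2 : AO (nbhdMatrix G) A₂)
    (h3 : cAO (nbhdMatrix G) (chi A₁ + 1) A₂) :
    (∀ p : V → ZMod 2, (starMatrix G A₁ A₂).mulVec p = 1 ↔
      ((nbhdMatrix G).mulVec p = chi A₁ + 1 ∨ (nbhdMatrix G).mulVec p = chi A₂ + 1)) ∧
    HO (starMatrix G A₁ A₂) A₁ ∧ HO (starMatrix G A₁ A₂) A₂ ∧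
    nullityM (starMatrix G A₁ A₂) = nullityM (nbhdMatrix G) + 1 := by
  classical
  have hMs : (nbhdMatrix G).IsSymm := nbhd_symm G
  set M := nbhdMatrix G with hMdef
  have hsh : ∀ x y : V → ZMod 2, M.mulVec x ⬝ᵥ y = x ⬝ᵥ M.mulVec y := dshuffle M hMs
  obtain ⟨q₁, hq₁⟩ := h1.1
  obtain ⟨q₂, hq₂⟩ := h2.1
  obtain ⟨r, hr⟩ := sutner M hMs (nbhd_diag G)
  have hdiag1 : (fun v => M v v) = (1 : V → ZMod 2) := funext fun v => nbhd_diag G v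
  have hquad : ∀ p : V → ZMod 2, M.mulVec p ⬝ᵥ p = (1 : V → ZMod 2) ⬝ᵥ p := fun p => by
    rw [quadId M hMs, hdiag1]
  have f1 : chi A₁ ⬝ᵥ r = 1 := h1.2 r hr
  have f2 : chi A₂ ⬝ᵥ r = 1 := h2.2 r hr
  have honeq₁ : q₁ ⬝ᵥ (1 : V → ZMod 2) = 1 := by
    have h := hsh q₁ r
    rw [hq₁, hr, f1] at h
    exact h.symm
  have honeq₂ : q₂ ⬝ᵥ (1 : V → ZMod 2) = 1 := by
    have h := hsh q₂ r
    rw [hq₂, hr, f2] at h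
    exact h.symm
  have e1 : chi A₁ ⬝ᵥ q₁ = 1 := by
    have h := hquad q₁
    rw [hq₁] at h
    rw [h, dotProduct_comm]
    exact honeq₁
  have e2 : chi A₂ ⬝ᵥ q₂ = 1 := by
    have h := hquad q₂
    rw [hq₂] at h
    rw [h, dotProduct_comm]
    exact honeq₂
  have hsol : M.mulVec (r + q₁) = chi A₁ + 1 := by
    rw [mulVec_add, hr, hq₁, add_comm]
  have f3 : chi A₂ ⬝ᵥ (r + q₁) = 1 := h3.2 _ hsol
  have δ1 : chi A₂ ⬝ᵥ q₁ = 0 := by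
    rw [dotProduct_add, f2] at f3
    have key : ∀ x : ZMod 2, 1 + x = 1 → x = 0 := by decide
    exact key _ f3
  have δ2 : chi A₁ ⬝ᵥ q₂ = 0 := by
    have h := hsh q₁ q₂
    rw [hq₁, hq₂] at h
    rw [h, dotProduct_comm]
    exact δ1
  have d11 : q₁ ⬝ᵥ chi A₁ = 1 := (dotProduct_comm _ _).trans e1
  have d12 : q₁ ⬝ᵥ chi A₂ = 0 := (dotProduct_comm _ _).trans δ1
  have d21 : q₂ ⬝ᵥ chi A₁ = 0 := (dotProduct_comm _ _).trans δ2
  have d22 : q₂ ⬝ᵥ chi A₂ = 1 := (dotProduct_comm _ _).trans e2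
  have hb : ∀ p : V → ZMod 2, chi A₁ ⬝ᵥ p = q₁ ⬝ᵥ M.mulVec p := fun p => by
    rw [← hq₁]; exact hsh q₁ p
  have ha : ∀ p : V → ZMod 2, chi A₂ ⬝ᵥ p = q₂ ⬝ᵥ M.mulVec p := fun p => by
    rw [← hq₂]; exact hsh q₂ p
  have hzm : ∀ x : ZMod 2, x = 0 ∨ x = 1 := by decide
  refine ⟨?_, ?_, ?_, ?_⟩
  · -- main equivalence
    intro p
    constructor
    · intro h
      have hc : M.mulVec p = 1 + ((chi A₂ ⬝ᵥ p) • chi A₁ + (chi A₁ ⬝ᵥ p) • chi A₂) := by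
        have h2' := (starMV G A₁ A₂ p).symm.trans h
        rw [add_assoc] at h2'
        exact pi_move h2'
      have hbval : chi A₁ ⬝ᵥ p = 1 + chi A₂ ⬝ᵥ p := by
        rw [hb p, hc, dotProduct_add, dotProduct_add, dotProduct_smul, dotProduct_smul,
          honeq₁, d11, d12, smul_eq_mul, smul_eq_mul, mul_one, mul_zero, add_zero]
      rcases hzm (chi A₂ ⬝ᵥ p) with ha0 | ha1
      · right
        rw [hc, ha0, hbval, ha0]
        funext v
        simp only [Pi.add_apply, Pi.smul_apply, Pi.one_apply, smul_eq_mul]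
        generalize chi A₁ v = x
        generalize chi A₂ v = y
        revert x y
        decide
      · left
        rw [hc, ha1, hbval, ha1]
        funext v
        simp only [Pi.add_apply, Pi.smul_apply, Pi.one_apply, smul_eq_mul]
        generalize chi A₁ v = x
        generalize chi A₂ v = y
        revert x y
        decide
    · rintro (h | h)
      · rw [starMV, h]
        have hbv : chi A₁ ⬝ᵥ p = 0 := by
          rw [hb p, h, dotProduct_add, d11, honeq₁]; decide
        have hav : chi A₂ ⬝ᵥ p = 1 := by
          rw [ha p, h, dotProduct_add, d21, honeq₂, zero_add]
        rw [hbv, hav]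
        funext v
        simp only [Pi.add_apply, Pi.smul_apply, Pi.one_apply, smul_eq_mul]
        generalize chi A₁ v = x
        generalize chi A₂ v = y
        revert x y
        decide
      · rw [starMV, h]
        have hbv : chi A₁ ⬝ᵥ p = 1 := by
          rw [hb p, h, dotProduct_add, d12, honeq₁, zero_add]
        have hav : chi A₂ ⬝ᵥ p = 0 := by
          rw [ha p, h, dotProduct_add, d22, honeq₂]; decide
        rw [hbv, hav]
        funext v
        simp only [Pi.add_apply, Pi.smul_apply, Pi.one_apply, smul_eq_mul]
        generalize chi A₁ v = x
        generalize chi A₂ v = y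
        revert x y
        decide
  · -- HO A₁
    rintro ⟨p, hp⟩
    have hc : M.mulVec p = chi A₁ + ((chi A₂ ⬝ᵥ p) • chi A₁ + (chi A₁ ⬝ᵥ p) • chi A₂) := by
      have h2' := (starMV G A₁ A₂ p).symm.trans hp
      rw [add_assoc] at h2'
      exact pi_move h2'
    have hbv : chi A₁ ⬝ᵥ p = 1 + chi A₂ ⬝ᵥ p := by
      rw [hb p, hc, dotProduct_add, dotProduct_add, dotProduct_smul, dotProduct_smul,
        d11, d12, smul_eq_mul, smul_eq_mul, mul_one, mul_zero, add_zero]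
    have hav : chi A₂ ⬝ᵥ p = chi A₁ ⬝ᵥ p := by
      rw [ha p, hc, dotProduct_add, dotProduct_add, dotProduct_smul, dotProduct_smul,
        d21, d22, smul_eq_mul, smul_eq_mul, mul_one, mul_zero, zero_add, zero_add]
    have key : ∀ x y : ZMod 2, x = 1 + y → y = x → False := by decide
    exact key _ _ hbv hav
  · -- HO A₂
    rintro ⟨p, hp⟩
    have hc : M.mulVec p = chi A₂ + ((chi A₂ ⬝ᵥ p) • chi A₁ + (chi A₁ ⬝ᵥ p) • chi A₂) := by
      have h2' := (starMV G A₁ A₂ p).symm.trans hp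
      rw [add_assoc] at h2'
      exact pi_move h2'
    have hbv : chi A₁ ⬝ᵥ p = chi A₂ ⬝ᵥ p := by
      rw [hb p, hc, dotProduct_add, dotProduct_add, dotProduct_smul, dotProduct_smul,
        d11, d12, smul_eq_mul, smul_eq_mul, mul_one, mul_zero, add_zero, zero_add]
    have hav : chi A₂ ⬝ᵥ p = 1 + chi A₁ ⬝ᵥ p := by
      rw [ha p, hc, dotProduct_add, dotProduct_add, dotProduct_smul, dotProduct_smul,
        d21, d22, smul_eq_mul, smul_eq_mul, mul_one, mul_zero, zero_add]
    have key : ∀ x y : ZMod 2, x = y → y = 1 + x → False := by decide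
    exact key _ _ hbv hav
  · -- nullity
    set k₀ : V → ZMod 2 := q₁ + q₂ with hk₀def
    have hMk₀ : M.mulVec k₀ = chi A₁ + chi A₂ := by
      rw [hk₀def, mulVec_add, hq₁, hq₂]
    have hk₀1 : chi A₁ ⬝ᵥ k₀ = 1 := by
      rw [hk₀def, dotProduct_add, e1, δ2, add_zero]
    have hk₀2 : chi A₂ ⬝ᵥ k₀ = 1 := by
      rw [hk₀def, dotProduct_add, δ1, e2, zero_add]
    have hSk₀ : (starMatrix G A₁ A₂).mulVec k₀ = 0 := by
      rw [starMV, hMk₀, hk₀1, hk₀2, one_smul, one_smul]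
      funext v
      simp only [Pi.add_apply, Pi.zero_apply]
      generalize chi A₁ v = x
      generalize chi A₂ v = y
      revert x y
      decide
    -- a vertex in A₁
    obtain ⟨v, hvne⟩ : ∃ v, chi A₁ v * r v ≠ 0 := by
      obtain ⟨v, _, hv⟩ := Finset.exists_ne_zero_of_sum_ne_zero
        (show (∑ v, chi A₁ v * r v) ≠ 0 by
          rw [show (∑ v, chi A₁ v * r v) = chi A₁ ⬝ᵥ r from rfl, f1]
          exact one_ne_zero)
      exact ⟨v, hv⟩
    have hvA : v ∈ A₁ := by
      by_contra hx
      exact hvne (by simp [chi, hx])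
    have hv1 : chi A₁ v = 1 := by simp [chi, hvA]
    have hv2 : chi A₂ v = 0 := by simp [chi, Set.disjoint_left.mp hd hvA]
    have hMk₀ne : M.mulVec k₀ ≠ 0 := by
      rw [hMk₀]
      intro h0
      have := congrFun h0 v
      rw [Pi.add_apply, hv1, hv2, add_zero] at this
      exact one_ne_zero this
    have hk₀ker : k₀ ∉ LinearMap.ker M.mulVecLin := by
      rw [LinearMap.mem_ker, mulVecLin_apply]
      exact hMk₀ne
    have hk₀ne : k₀ ≠ 0 := fun h => hMk₀ne (by rw [h, mulVec_zero])
    have hker_eq : LinearMap.ker (starMatrix G A₁ A₂).mulVecLin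
        = LinearMap.ker M.mulVecLin ⊔ Submodule.span (ZMod 2) {k₀} := by
      apply le_antisymm
      · intro k hk
        have hSk : (starMatrix G A₁ A₂).mulVec k = 0 := by
          rw [← mulVecLin_apply]; exact LinearMap.mem_ker.mp hk
        have hc : M.mulVec k = (chi A₂ ⬝ᵥ k) • chi A₁ + (chi A₁ ⬝ᵥ k) • chi A₂ := by
          have h2' := (starMV G A₁ A₂ k).symm.trans hSk
          rw [add_assoc] at h2'
          have h3' := pi_move h2'
          rw [h3', zero_add]
        have hbv : chi A₁ ⬝ᵥ k = chi A₂ ⬝ᵥ k := by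
          rw [hb k, hc, dotProduct_add, dotProduct_smul, dotProduct_smul,
            d11, d12, smul_eq_mul, smul_eq_mul, mul_one, mul_zero, add_zero]
        rcases hzm (chi A₂ ⬝ᵥ k) with ha0 | ha1
        · apply Submodule.mem_sup_left
          rw [LinearMap.mem_ker, mulVecLin_apply, hc, ha0, hbv, ha0, zero_smul, zero_smul,
            add_zero]
        · have hmem : k + k₀ ∈ LinearMap.ker M.mulVecLin := by
            rw [LinearMap.mem_ker, mulVecLin_apply, mulVec_add, hc, ha1, hbv, ha1,
              one_smul, one_smul, hMk₀, pi_add_self]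
          have hkeq : k = (k + k₀) + k₀ := by
            rw [add_assoc, pi_add_self, add_zero]
          rw [hkeq]
          exact Submodule.add_mem_sup hmem (Submodule.mem_span_singleton_self k₀)
      · apply sup_le
        · intro k hk
          have hMk : M.mulVec k = 0 := by
            rw [← mulVecLin_apply]; exact LinearMap.mem_ker.mp hk
          rw [LinearMap.mem_ker, mulVecLin_apply, starMV G A₁ A₂ k]
          have hb0 : chi A₁ ⬝ᵥ k = 0 := by rw [hb k, hMk, dotProduct_zero]
          have ha0 : chi A₂ ⬝ᵥ k = 0 := by rw [ha k, hMk, dotProduct_zero]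
          rw [hMk, hb0, ha0, zero_smul, zero_smul, add_zero, add_zero]
        · rw [Submodule.span_le, Set.singleton_subset_iff]
          rw [SetLike.mem_coe, LinearMap.mem_ker, mulVecLin_apply]
          exact hSk₀
    have hinf : LinearMap.ker M.mulVecLin ⊓ Submodule.span (ZMod 2) {k₀} = ⊥ := by
      rw [eq_bot_iff]
      rintro x ⟨hx1, hx2⟩
      obtain ⟨c, hc⟩ := Submodule.mem_span_singleton.mp hx2
      rcases hzm c with h0 | h0
      · rw [Submodule.mem_bot, ← hc, h0, zero_smul]
      · exfalso
        rw [h0, one_smul] at hc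
        exact hk₀ker (hc ▸ hx1)
    have hdim := Submodule.finrank_sup_add_finrank_inf_eq
      (LinearMap.ker M.mulVecLin) (Submodule.span (ZMod 2) {k₀})
    rw [hinf, finrank_bot, add_zero, finrank_span_singleton hk₀ne] at hdim
    show Module.finrank (ZMod 2) (LinearMap.ker (starMatrix G A₁ A₂).mulVecLin)
      = Module.finrank (ZMod 2) (LinearMap.ker M.mulVecLin) + 1
    rw [hker_eq, hdim]
end

section
/- Let A₁ be an AO set and A₂ be a HO set in G, with A₁ and A₂ disjoint. Then for any pattern p, N(G*)p = 𝟏 if and only if N(G)p = x̄_{A₁} and x_{A₂}·p = 1. Moreover, A₁ is NO and A₂ is AO in G*, and ν(G*) = ν(G) − 1. -/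
open Matrix
open scoped Classical

open Module

/-!
Over `ℤ₂`, a symmetric matrix `N` with unit diagonal satisfies `k ⬝ N k = 𝟏 ⬝ k`, because the
off-diagonal terms cancel in pairs. The range of a symmetric matrix is the orthogonal complement of
its kernel, so `𝟏` is solvable, and the AO property of `A₁` upgrades to `x₁ ⬝ q = 1` whenever
`N q = x₁` (as `x₁ ⬝ q = q ⬝ N q = 𝟏 ⬝ q = r ⬝ x₁` for any `r` with `N r = 𝟏`).

Toggling gives `N* p = N p + (x₂ ⬝ p) x₁ + (x₁ ⬝ p) x₂`. If `N* p` is solvable in `G`, then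
`x₁ ⬝ p = 0`, since otherwise `x₂` would be solvable; the AO property of `A₁` then fixes `x₂ ⬝ p`.
This describes the solutions of `N* p = 𝟏` and shows `ker N* = ker N ∩ x₂^⊥`. Since `A₂` is HO,
`x₂` is not orthogonal to `ker N`, so the kernel loses exactly one dimension.
-/

theorem Finset.sum_sum_eq_sum_diag_of_symm {ι R : Type*} [CommRing R] [CharP R 2]
    (s : Finset ι) (f : ι → ι → R) (hf : ∀ i j, f i j = f j i) :
    ∑ i ∈ s, ∑ j ∈ s, f i j = ∑ i ∈ s, f i i := by
  induction s using Finset.induction_on with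
  | empty => simp
  | insert a s ha ih =>
    simp only [Finset.sum_insert ha, Finset.sum_add_distrib, ih, hf _ a]
    linear_combination CharTwo.add_self_eq_zero (∑ i ∈ s, f a i)

theorem Submodule.finrank_inf_ker_add_one {K W : Type*} [Field K] [AddCommGroup W] [Module K W]
    [FiniteDimensional K W] (U : Submodule K W) (f : Dual K W) (hf : ∃ u ∈ U, f u ≠ 0) :
    finrank K (U ⊓ LinearMap.ker f : Submodule K W) + 1 = finrank K U := by
  obtain ⟨u, hu, hfu⟩ := hf
  have hg : f.domRestrict U ≠ 0 := fun h => hfu (LinearMap.congr_fun h ⟨u, hu⟩)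
  rw [← Dual.finrank_ker_add_one_of_ne_zero hg, LinearMap.ker_domRestrict,
    ← (Submodule.comapSubtypeEquivOfLe (inf_le_left : U ⊓ LinearMap.ker f ≤ U)).finrank_eq,
    Submodule.comap_inf, Submodule.comap_subtype_self, top_inf_eq]

namespace Matrix

variable {m n : Type*} [Fintype m] [Fintype n]

theorem IsSymm.dotProduct_mulVec_comm {R : Type*} [CommSemiring R] {M : Matrix n n R}
    (hM : M.IsSymm) (u w : n → R) : u ⬝ᵥ M *ᵥ w = M *ᵥ u ⬝ᵥ w := by
  rw [dotProduct_mulVec, ← mulVec_transpose, hM.eq]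

theorem IsSymm.dotProduct_mulVec_self_of_charTwo {R : Type*} [CommRing R] [CharP R 2]
    {M : Matrix n n R} (hM : M.IsSymm) (k : n → R) :
    k ⬝ᵥ M *ᵥ k = ∑ i, M i i * k i ^ 2 := by
  have hsum : k ⬝ᵥ M *ᵥ k = ∑ i, ∑ j, k i * M i j * k j := by
    simp only [dotProduct, mulVec, Finset.mul_sum, mul_assoc]
  rw [hsum, Finset.sum_sum_eq_sum_diag_of_symm _ _ fun i j => by rw [hM.apply i j]; ring]
  exact Finset.sum_congr rfl fun i _ => by ring

theorem exists_mulVec_eq_of_forall_dotProduct_eq_zero {K : Type*} [Field K] (M : Matrix m n K)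
    (c : m → K) (hc : ∀ k, Mᵀ *ᵥ k = 0 → c ⬝ᵥ k = 0) : ∃ p, M *ᵥ p = c := by
  by_contra hn
  have hcM : c ∉ LinearMap.range M.mulVecLin := by simpa using hn
  obtain ⟨f, hfc, hf⟩ := Submodule.exists_dual_map_eq_bot_of_notMem hcM inferInstance
  set w := (dotProductEquiv K m).symm f
  have hfw : ∀ x, f x = w ⬝ᵥ x := fun x => by
    rw [← dotProductEquiv_apply_apply, LinearEquiv.apply_symm_apply]
  have hw : Mᵀ *ᵥ w = 0 := dotProduct_eq_zero _ fun p => by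
    rw [mulVec_transpose, ← dotProduct_mulVec, ← hfw, ← Submodule.mem_bot K, ← hf]
    exact Submodule.mem_map_of_mem ⟨p, rfl⟩
  exact hfc (by rw [hfw, dotProduct_comm, hc w hw])

end Matrix

theorem ZMod.eq_zero_or_eq_one (x : ZMod 2) : x = 0 ∨ x = 1 := by
  revert x; decide

section SymmetricUnitDiagonal

variable {n : Type*} [Fintype n] {M : Matrix n n (ZMod 2)}

theorem Matrix.IsSymm.dotProduct_mulVec_self_of_diag_eq_one (hM : M.IsSymm)
    (hdiag : ∀ i, M i i = 1) (k : n → ZMod 2) : k ⬝ᵥ M *ᵥ k = 1 ⬝ᵥ k := by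
  rw [hM.dotProduct_mulVec_self_of_charTwo, one_dotProduct]
  exact Finset.sum_congr rfl fun i _ => by rw [hdiag, one_mul, ZMod.pow_card]

theorem solv_of_forall_dotProduct_eq_zero (hM : M.IsSymm) {c : n → ZMod 2}
    (hc : ∀ k, M *ᵥ k = 0 → c ⬝ᵥ k = 0) : Solv M c :=
  M.exists_mulVec_eq_of_forall_dotProduct_eq_zero c (hM.eq ▸ hc)

theorem solv_one (hM : M.IsSymm) (hdiag : ∀ i, M i i = 1) : Solv M 1 :=
  solv_of_forall_dotProduct_eq_zero hM fun k hk => by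
    rw [← hM.dotProduct_mulVec_self_of_diag_eq_one hdiag, hk, dotProduct_zero]

theorem exists_mulVec_eq_zero_dotProduct_eq_one_of_not_solv (hM : M.IsSymm) {b : n → ZMod 2}
    (hb : ¬ Solv M b) : ∃ k, M *ᵥ k = 0 ∧ b ⬝ᵥ k = 1 := by
  by_contra! h
  exact hb (solv_of_forall_dotProduct_eq_zero hM fun k hk =>
    (ZMod.eq_zero_or_eq_one _).resolve_right (h k hk))

theorem Solv.dotProduct_eq_zero_of_mulVec_eq_zero (hM : M.IsSymm) {a k : n → ZMod 2}
    (ha : Solv M a) (hk : M *ᵥ k = 0) : a ⬝ᵥ k = 0 := by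
  obtain ⟨q, rfl⟩ := ha
  rw [← hM.dotProduct_mulVec_comm, hk, dotProduct_zero]

theorem dotProduct_eq_one_of_mulVec_eq (hM : M.IsSymm) (hdiag : ∀ i, M i i = 1)
    {a k : n → ZMod 2} (haAO : ∀ r, M *ᵥ r = 1 → a ⬝ᵥ r = 1) (hk : M *ᵥ k = a) :
    a ⬝ᵥ k = 1 := by
  obtain ⟨r, hr⟩ := solv_one hM hdiag
  calc a ⬝ᵥ k = k ⬝ᵥ M *ᵥ k := by rw [hk, dotProduct_comm]
    _ = M *ᵥ r ⬝ᵥ k := by rw [hM.dotProduct_mulVec_self_of_diag_eq_one hdiag, hr]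
    _ = a ⬝ᵥ r := by rw [← hM.dotProduct_mulVec_comm, hk, dotProduct_comm]
    _ = 1 := haAO r hr

theorem dotProduct_eq_zero_of_mulVec_eq_add_one (hM : M.IsSymm) (hdiag : ∀ i, M i i = 1)
    {a p : n → ZMod 2} (hp : M *ᵥ p = a + 1) : a ⬝ᵥ p = 0 := by
  have h := hM.dotProduct_mulVec_self_of_diag_eq_one hdiag p
  rw [hp, dotProduct_add, dotProduct_comm p 1, add_eq_right, dotProduct_comm] at h
  exact h

end SymmetricUnitDiagonal

namespace Matrix

-- `starMatrix G A₁ A₂` is definitionally `(nbhdMatrix G).toggle (chi A₁) (chi A₂)`.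
def toggle {n R : Type*} [Mul R] [Add R] (M : Matrix n n R) (a b : n → R) : Matrix n n R :=
  M + vecMulVec a b + vecMulVec b a

theorem toggle_mulVec {n R : Type*} [Fintype n] [CommSemiring R] (M : Matrix n n R)
    (a b p : n → R) : M.toggle a b *ᵥ p = M *ᵥ p + (b ⬝ᵥ p) • a + (a ⬝ᵥ p) • b := by
  simp only [toggle, add_mulVec, vecMulVec_mulVec, op_smul_eq_smul]

end Matrix

section Toggle

variable {n : Type*} [Fintype n] {M : Matrix n n (ZMod 2)} {a b : n → ZMod 2}

theorem toggle_mulVec_eq_iff_of_solv (ha : Solv M a) (hb : ¬ Solv M b) {c p : n → ZMod 2}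
    (hc : Solv M c) :
    M.toggle a b *ᵥ p = c ↔ a ⬝ᵥ p = 0 ∧ M *ᵥ p + (b ⬝ᵥ p) • a = c := by
  rw [M.toggle_mulVec]
  refine ⟨fun hp => ?_, fun ⟨hap, hp⟩ => by rw [hap, zero_smul, add_zero, hp]⟩
  obtain hap | hap := ZMod.eq_zero_or_eq_one (a ⬝ᵥ p)
  · rw [hap, zero_smul, add_zero] at hp
    exact ⟨hap, hp⟩
  · rw [hap, one_smul] at hp
    obtain ⟨q, hq⟩ := ha
    obtain ⟨r, hr⟩ := hc
    refine absurd ⟨r - (p + (b ⬝ᵥ p) • q), ?_⟩ hb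
    rw [mulVec_sub, mulVec_add, mulVec_smul, hq, hr, ← hp, add_sub_cancel_left]

theorem toggle_mulVec_eq_one_iff (hM : M.IsSymm) (hdiag : ∀ i, M i i = 1) (ha : Solv M a)
    (haAO : ∀ r, M *ᵥ r = 1 → a ⬝ᵥ r = 1) (hb : ¬ Solv M b) {p : n → ZMod 2} :
    M.toggle a b *ᵥ p = 1 ↔ M *ᵥ p = a + 1 ∧ b ⬝ᵥ p = 1 := by
  rw [toggle_mulVec_eq_iff_of_solv ha hb (solv_one hM hdiag)]
  constructor
  · rintro ⟨hap, hp⟩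
    obtain hbp | hbp := ZMod.eq_zero_or_eq_one (b ⬝ᵥ p)
    · rw [hbp, zero_smul, add_zero] at hp
      exact absurd ((haAO p hp).symm.trans hap) one_ne_zero
    · rw [hbp, one_smul] at hp
      exact ⟨by rw [← hp, add_left_comm, ZModModule.add_self, add_zero], hbp⟩
  · rintro ⟨hp, hbp⟩
    refine ⟨dotProduct_eq_zero_of_mulVec_eq_add_one hM hdiag hp, ?_⟩
    rw [hp, hbp, one_smul, add_right_comm, ZModModule.add_self, zero_add]

theorem toggle_mulVec_eq_zero_iff (hM : M.IsSymm) (hdiag : ∀ i, M i i = 1) (ha : Solv M a)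
    (haAO : ∀ r, M *ᵥ r = 1 → a ⬝ᵥ r = 1) (hb : ¬ Solv M b) {k : n → ZMod 2} :
    M.toggle a b *ᵥ k = 0 ↔ M *ᵥ k = 0 ∧ b ⬝ᵥ k = 0 := by
  rw [toggle_mulVec_eq_iff_of_solv ha hb ⟨0, mulVec_zero M⟩]
  constructor
  · rintro ⟨hak, hk⟩
    obtain hbk | hbk := ZMod.eq_zero_or_eq_one (b ⬝ᵥ k)
    · rw [hbk, zero_smul, add_zero] at hk
      exact ⟨hk, hbk⟩
    · rw [hbk, one_smul, add_eq_zero_iff_eq_neg, ZModModule.neg_eq_self] at hk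
      exact absurd ((dotProduct_eq_one_of_mulVec_eq hM hdiag haAO hk).symm.trans hak) one_ne_zero
  · rintro ⟨hk, hbk⟩
    rw [hk, hbk, zero_smul, add_zero]
    exact ⟨ha.dotProduct_eq_zero_of_mulVec_eq_zero hM hk, rfl⟩

theorem solv_toggle_left (hM : M.IsSymm) (ha : Solv M a) (hb : ¬ Solv M b) :
    Solv (M.toggle a b) a := by
  obtain ⟨k, hk, hbk⟩ := exists_mulVec_eq_zero_dotProduct_eq_one_of_not_solv hM hb
  refine ⟨k, ?_⟩
  rw [M.toggle_mulVec, hk, hbk, ha.dotProduct_eq_zero_of_mulVec_eq_zero hM hk, zero_smul,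
    add_zero, one_smul, zero_add]

theorem solv_toggle_right (hM : M.IsSymm) (hdiag : ∀ i, M i i = 1) (ha : Solv M a)
    (haAO : ∀ r, M *ᵥ r = 1 → a ⬝ᵥ r = 1) (hb : ¬ Solv M b) : Solv (M.toggle a b) b := by
  obtain ⟨q, hq⟩ := ha
  obtain ⟨k, hk, hbk⟩ := exists_mulVec_eq_zero_dotProduct_eq_one_of_not_solv hM hb
  have hp : M *ᵥ (q + (1 - b ⬝ᵥ q) • k) = a := by
    rw [mulVec_add, mulVec_smul, hk, smul_zero, add_zero, hq]
  have hbp : b ⬝ᵥ (q + (1 - b ⬝ᵥ q) • k) = 1 := by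
    rw [dotProduct_add, dotProduct_smul, hbk, smul_eq_mul, mul_one, add_sub_cancel]
  refine ⟨q + (1 - b ⬝ᵥ q) • k, ?_⟩
  rw [M.toggle_mulVec, hp, hbp, dotProduct_eq_one_of_mulVec_eq hM hdiag haAO hp, one_smul,
    one_smul, ZModModule.add_self, zero_add]

theorem nullityM_toggle_add_one (hM : M.IsSymm) (hdiag : ∀ i, M i i = 1) (ha : Solv M a)
    (haAO : ∀ r, M *ᵥ r = 1 → a ⬝ᵥ r = 1) (hb : ¬ Solv M b) :
    nullityM (M.toggle a b) + 1 = nullityM M := by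
  obtain ⟨k, hk, hbk⟩ := exists_mulVec_eq_zero_dotProduct_eq_one_of_not_solv hM hb
  have hker : LinearMap.ker (M.toggle a b).mulVecLin =
      LinearMap.ker M.mulVecLin ⊓ LinearMap.ker (dotProductEquiv (ZMod 2) n b) := by
    ext x
    simp [toggle_mulVec_eq_zero_iff hM hdiag ha haAO hb]
  rw [nullityM, nullityM, hker]
  exact Submodule.finrank_inf_ker_add_one _ _ ⟨k, hk, by simp [hbk]⟩

end Toggle

theorem nbhdMatrix_isSymm {V : Type*} [Fintype V] (G : SimpleGraph V) :
    (nbhdMatrix G).IsSymm := by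
  ext u v
  simp only [nbhdMatrix, transpose_apply, of_apply, eq_comm, G.adj_comm]

theorem nbhdMatrix_apply_self {V : Type*} [Fintype V] (G : SimpleGraph V) (v : V) :
    nbhdMatrix G v v = 1 := by
  simp [nbhdMatrix]

theorem stmt16_general {V : Type*} [Fintype V] (G : SimpleGraph V) (A₁ A₂ : Set V)
    (h1 : AO (nbhdMatrix G) A₁) (h2 : HO (nbhdMatrix G) A₂) :
    (∀ p : V → ZMod 2, (starMatrix G A₁ A₂).mulVec p = 1 ↔
      ((nbhdMatrix G).mulVec p = chi A₁ + 1 ∧ chi A₂ ⬝ᵥ p = 1)) ∧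
    NO (starMatrix G A₁ A₂) A₁ ∧ AO (starMatrix G A₁ A₂) A₂ ∧
    nullityM (starMatrix G A₁ A₂) + 1 = nullityM (nbhdMatrix G) := by
  have hM := nbhdMatrix_isSymm G
  have hdiag := nbhdMatrix_apply_self G
  obtain ⟨ha, haAO⟩ := h1
  have hstar : ∀ p, starMatrix G A₁ A₂ *ᵥ p = 1 ↔ _ := fun p =>
    toggle_mulVec_eq_one_iff (p := p) hM hdiag ha haAO h2
  refine ⟨hstar, ⟨solv_toggle_left hM ha h2, fun p hp => ?_⟩,
    ⟨solv_toggle_right hM hdiag ha haAO h2, fun p hp => ((hstar p).1 hp).2⟩,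
    nullityM_toggle_add_one hM hdiag ha haAO h2⟩
  exact dotProduct_eq_zero_of_mulVec_eq_add_one hM hdiag ((hstar p).1 hp).1

/-- Proposition (AO, HO): the odd dominating patterns of `G*` are exactly the solving
patterns `p` of `x̄_{A₁}` in `G` with `x_{A₂} · p = 1`; in `G*`, `A₁` is NO and `A₂` is
AO, and `ν(G*) = ν(G) − 1`. -/
theorem stmt16 {V : Type*} [Fintype V] (G : SimpleGraph V) (A₁ A₂ : Set V)
    (hd : Disjoint A₁ A₂)
    (h1 : AO (nbhdMatrix G) A₁) (h2 : HO (nbhdMatrix G) A₂) :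
    (∀ p : V → ZMod 2, (starMatrix G A₁ A₂).mulVec p = 1 ↔
      ((nbhdMatrix G).mulVec p = chi A₁ + 1 ∧ chi A₂ ⬝ᵥ p = 1)) ∧
    NO (starMatrix G A₁ A₂) A₁ ∧ AO (starMatrix G A₁ A₂) A₂ ∧
    nullityM (starMatrix G A₁ A₂) + 1 = nullityM (nbhdMatrix G) :=
  stmt16_general G A₁ A₂ h1 h2
end
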